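/- arXiv:1403.5814 — 2 statements merged into one kernel-verified Lean document; each statement's English description precedes it below -/
import Mathlib

section
/- Let X be a nonempty finite-dimensional Noetherian topological space. Then X is biequidimensional if and only if X is equidimensional and for all irreducible closed subsets Y ⊆ Z of X one has dim(Z) = dim(Y) + codim(Y, Z). -/
open Order TopologicalSpace

/-!
Only the poset of irreducible closed subsets matters, and there `dim Y` is the height of `Y`.
When the dimension is finite, a longest series ending at `a` is saturated and starts at a minimal
element (a gap would give a longer one), and dually a longest series starting at `a` climbs to a
maximal element; applied inside `Set.Icc a b` this also gives a saturated series from `a` to `b`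
of length `codim (a, b)`. Given biequidimensionality, gluing such pieces yields two maximal
chains through `b`, one passing through `a ≤ b`, and comparing their lengths gives
`height b = height a + codim (a, b)`; two longest series ending at maximal elements give
equidimensionality. Conversely, `[a, b]` has dimension one when `a ⋖ b`, so the codimension
formula makes heights increase by one along saturated series: a maximal chain has the length of
the height of its last element, which is the same for all maximal elements.
-/

/-- A maximal chain of irreducible closed subsets. -/
def IsMaximalChain {α : Type*} [PartialOrder α] (p : LTSeries α) : Prop :=
  IsMin p.head ∧ IsMax p.last ∧ ∀ i : Fin p.length, p.toFun i.castSucc ⋖ p.toFun i.succ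

namespace LTSeries

variable {α β : Type*} [PartialOrder α] [PartialOrder β]

def IsSaturated (p : LTSeries α) : Prop :=
  ∀ i : Fin p.length, p i.castSucc ⋖ p i.succ

lemma IsSaturated.smash {p q : LTSeries α} (hp : p.IsSaturated) (hq : q.IsSaturated)
    (h : p.last = q.head) : IsSaturated (p.smash q h) := by
  intro i
  induction i using Fin.addCases with
  | left i =>
    convert hp i using 1
    exacts [RelSeries.smash_castAdd h i, RelSeries.smash_succ_castAdd h i]
  | right i =>
    convert hq i using 1
    exacts [RelSeries.smash_natAdd h i, RelSeries.smash_succ_natAdd h i]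

lemma IsSaturated.map {p : LTSeries α} (hp : p.IsSaturated) (f : α ↪o β)
    (hf : (Set.range f).OrdConnected) : (p.map f f.strictMono).IsSaturated :=
  fun i ↦ (hp i).image f hf

end LTSeries

section Height

variable {α : Type*} [PartialOrder α]

lemma height_ne_top_of_krullDim_ne_top (h : krullDim α ≠ ⊤) (a : α) : height a ≠ ⊤ :=
  fun ha ↦ h (eq_top_iff.mpr (by simpa [ha] using height_le_krullDim a))

lemma coheight_ne_top_of_krullDim_ne_top (h : krullDim α ≠ ⊤) (a : α) : coheight a ≠ ⊤ :=
  fun ha ↦ h (eq_top_iff.mpr (by simpa [ha] using coheight_le_krullDim a))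

lemma covBy_of_height_eq_add_one {a b : α} (hab : a < b) (ha : height a ≠ ⊤)
    (h : height b = height a + 1) : a ⋖ b := by
  refine ⟨hab, fun c hac hcb ↦ ?_⟩
  have : height a + 1 + 1 ≤ height a + 1 := h ▸
    (add_le_add_left (height_add_one_le hac) 1).trans (height_add_one_le hcb)
  lift height a to ℕ using ha with n
  norm_cast at this
  omega

lemma covBy_of_coheight_eq_add_one {a b : α} (hab : a < b) (hb : coheight b ≠ ⊤)
    (h : coheight a = coheight b + 1) : a ⋖ b := by
  refine ⟨hab, fun c hac hcb ↦ ?_⟩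
  have : coheight b + 1 + 1 ≤ coheight b + 1 := h ▸
    (add_le_add_left (coheight_add_one_le hcb) 1).trans (coheight_add_one_le hac)
  lift coheight b to ℕ using hb with n
  norm_cast at this
  omega

lemma exists_isSaturated_last_eq (a : α) (ha : height a ≠ ⊤) :
    ∃ p : LTSeries α, IsMin p.head ∧ p.last = a ∧ p.IsSaturated ∧ p.length = height a := by
  lift height a to ℕ using ha with n hn
  obtain ⟨p, rfl, hlen⟩ := exists_series_of_height_eq_coe a hn.symm
  have hidx := height_eq_index_of_length_eq_height_last (p := p) (by rw [hlen, hn])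
  refine ⟨p, ?_, rfl, fun i ↦ ?_, by rw [hlen, hn]⟩
  · exact height_eq_zero.mp (hidx 0)
  · refine covBy_of_height_eq_add_one (p.step i) (by simp [hidx]) ?_
    simp [hidx]

lemma exists_isSaturated_head_eq (a : α) (ha : coheight a ≠ ⊤) :
    ∃ p : LTSeries α, p.head = a ∧ IsMax p.last ∧ p.IsSaturated := by
  lift coheight a to ℕ using ha with n hn
  obtain ⟨p, rfl, hlen⟩ := exists_series_of_coheight_eq_coe a hn.symm
  have hidx := coheight_eq_index_of_length_eq_head_coheight (p := p) (by rw [hlen, hn])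
  refine ⟨p, rfl, coheight_eq_zero.mp ((hidx (Fin.last _)).trans (by simp)), fun i ↦ ?_⟩
  refine covBy_of_coheight_eq_add_one (p.step i) (by simp [hidx]) ?_
  rw [hidx, hidx]
  norm_cast
  simp only [Fin.val_rev, Fin.val_castSucc, Fin.val_succ]
  omega

lemma exists_isSaturated_head_last_eq {a b : α} (hab : a ≤ b)
    (h : krullDim (Set.Icc a b) ≠ ⊤) :
    ∃ p : LTSeries α, p.head = a ∧ p.last = b ∧ p.IsSaturated ∧
      krullDim (Set.Icc a b) = p.length := by
  have : Fact (a ≤ b) := ⟨hab⟩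
  rw [← height_top_eq_krullDim] at h ⊢
  obtain ⟨p, hmin, hlast, hsat, hlen⟩ :=
    exists_isSaturated_last_eq (⊤ : Set.Icc a b) fun h' ↦ h (by rw [h']; rfl)
  have hconn : (Set.range (OrderEmbedding.subtype (· ∈ Set.Icc a b))).OrdConnected := by
    simp only [OrderEmbedding.coe_subtype, Subtype.range_coe_subtype]
    exact Set.ordConnected_Icc
  refine ⟨p.map _ (OrderEmbedding.subtype _).strictMono, ?_, ?_, hsat.map _ hconn, ?_⟩
  · simp [hmin.eq_bot]
  · simp [hlast]
  · rw [← hlen]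
    rfl

lemma krullDim_Icc_of_covBy {a b : α} (h : a ⋖ b) : krullDim (Set.Icc a b) = 1 := by
  have : Fact (a ≤ b) := ⟨h.le⟩
  have : IsSimpleOrder (Set.Icc a b) := by
    rw [isSimpleOrder_iff_isAtom_top, ← bot_covBy_iff]
    exact CovBy.of_image (OrderEmbedding.subtype _) h
  exact krullDim_of_isSimpleOrder

lemma LTSeries.height_eq_index_of_isSaturated
    (hcov : ∀ a b : α, a ⋖ b → height b = height a + 1) {p : LTSeries α}
    (hmin : IsMin p.head) (hsat : p.IsSaturated) (i : Fin (p.length + 1)) :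
    height (p i) = i := by
  induction i using Fin.induction with
  | zero => exact hmin.height_eq_zero
  | succ i ih =>
    rw [hcov _ _ (hsat i), ih]
    simp

end Height

section Biequidimensional

variable {α : Type*} [PartialOrder α]

variable (α) in
def IsBiequidimensional : Prop :=
  ∀ p q : LTSeries α, IsMaximalChain p → IsMaximalChain q → p.length = q.length

namespace IsBiequidimensional

lemma height_eq_of_isMax (hα : IsBiequidimensional α) (hfin : krullDim α ≠ ⊤) {a b : α}
    (ha : IsMax a) (hb : IsMax b) : height a = height b := by
  obtain ⟨p, hpmin, rfl, hpsat, hp⟩ :=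
    exists_isSaturated_last_eq a (height_ne_top_of_krullDim_ne_top hfin a)
  obtain ⟨q, hqmin, rfl, hqsat, hq⟩ :=
    exists_isSaturated_last_eq b (height_ne_top_of_krullDim_ne_top hfin b)
  rw [← hp, ← hq, hα p q ⟨hpmin, ha, hpsat⟩ ⟨hqmin, hb, hqsat⟩]

lemma height_eq_height_add_krullDim_Icc (hα : IsBiequidimensional α) (hfin : krullDim α ≠ ⊤)
    {a b : α} (hab : a ≤ b) :
    (height b : WithBot ℕ∞) = height a + krullDim (Set.Icc a b) := by
  obtain ⟨r, hrmin, hra, hrsat, hr⟩ :=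
    exists_isSaturated_last_eq a (height_ne_top_of_krullDim_ne_top hfin a)
  obtain ⟨s, hsa, hsb, hssat, hs⟩ := exists_isSaturated_head_last_eq hab
    (ne_top_of_le_ne_top hfin (krullDim_le_of_strictMono _ (Subtype.strictMono_coe _)))
  obtain ⟨t, htmin, htb, htsat, ht⟩ :=
    exists_isSaturated_last_eq b (height_ne_top_of_krullDim_ne_top hfin b)
  obtain ⟨u, hub, humax, husat⟩ :=
    exists_isSaturated_head_eq b (coheight_ne_top_of_krullDim_ne_top hfin b)
  have hrs : r.last = s.head := hra.trans hsa.symm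
  have hsu : (r.smash s hrs).last = u.head := by simp [hsb, hub]
  have htu : t.last = u.head := htb.trans hub.symm
  have hlen := hα ((r.smash s hrs).smash u hsu) (t.smash u htu)
    ⟨by simpa using hrmin, by simpa using humax, (hrsat.smash hssat hrs).smash husat hsu⟩
    ⟨by simpa using htmin, by simpa using humax, htsat.smash husat htu⟩
  simp only [RelSeries.smash_length] at hlen
  rw [← hr, ← ht, hs]
  norm_cast
  omega

end IsBiequidimensional

lemma isBiequidimensional_of_forall_covBy
    (hmax : ∀ a b : α, IsMax a → IsMax b → height a = height b)
    (hcov : ∀ a b : α, a ⋖ b → height b = height a + 1) : IsBiequidimensional α := by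
  rintro p q ⟨hpmin, hpmax, hpsat⟩ ⟨hqmin, hqmax, hqsat⟩
  have hp := LTSeries.height_eq_index_of_isSaturated hcov hpmin hpsat (Fin.last _)
  have hq := LTSeries.height_eq_index_of_isSaturated hcov hqmin hqsat (Fin.last _)
  have := hmax _ _ hpmax hqmax
  simp only [RelSeries.last, hp, hq, Fin.val_last] at this
  exact_mod_cast this

theorem isBiequidimensional_iff (hfin : krullDim α ≠ ⊤) :
    IsBiequidimensional α ↔
      (∀ a b : α, IsMax a → IsMax b → krullDim (Set.Iic a) = krullDim (Set.Iic b)) ∧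
        ∀ a b : α, a ≤ b →
          krullDim (Set.Iic b) = krullDim (Set.Iic a) + krullDim (Set.Icc a b) := by
  simp only [← height_eq_krullDim_Iic, WithBot.coe_inj]
  refine ⟨fun h ↦ ⟨fun a b ha hb ↦ h.height_eq_of_isMax hfin ha hb,
    fun a b hab ↦ h.height_eq_height_add_krullDim_Icc hfin hab⟩, fun ⟨hmax, hcodim⟩ ↦
    isBiequidimensional_of_forall_covBy hmax fun a b hab ↦ ?_⟩
  have := hcodim a b hab.le
  rw [krullDim_Icc_of_covBy hab] at this
  exact_mod_cast this

end Biequidimensional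

theorem stmt_4_general (X : Type*) [TopologicalSpace X]
    (hfd : topologicalKrullDim X < ⊤) :
    (∀ p q : LTSeries (IrreducibleCloseds X),
        IsMaximalChain p → IsMaximalChain q → p.length = q.length) ↔
      ((∀ Z Z' : IrreducibleCloseds X, IsMax Z → IsMax Z' →
          Order.krullDim (Set.Iic Z) = Order.krullDim (Set.Iic Z')) ∧
        ∀ Y Z : IrreducibleCloseds X, Y ≤ Z →
          Order.krullDim (Set.Iic Z)
            = Order.krullDim (Set.Iic Y) + Order.krullDim (Set.Icc Y Z)) :=
  isBiequidimensional_iff hfd.ne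

/-- Let `X` be a nonempty finite-dimensional Noetherian topological space.  Then `X` is
biequidimensional (all maximal chains of irreducible closed subsets have the same length) if
and only if `X` is equidimensional and for all irreducible closed subsets `Y ⊆ Z` of `X` one
has `dim Z = dim Y + codim (Y, Z)`, where `dim Y` is the Krull dimension of the poset of
irreducible closed subsets contained in `Y` and `codim (Y, Z)` that of the interval `[Y, Z]`. -/
theorem stmt_4 (X : Type*) [TopologicalSpace X] [NoetherianSpace X] [Nonempty X]
    (hfd : topologicalKrullDim X < ⊤) :
    (∀ p q : LTSeries (IrreducibleCloseds X),
        IsMaximalChain p → IsMaximalChain q → p.length = q.length) ↔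
      ((∀ Z Z' : IrreducibleCloseds X, IsMax Z → IsMax Z' →
          Order.krullDim (Set.Iic Z) = Order.krullDim (Set.Iic Z')) ∧
        ∀ Y Z : IrreducibleCloseds X, Y ≤ Z →
          Order.krullDim (Set.Iic Z)
            = Order.krullDim (Set.Iic Y) + Order.krullDim (Set.Icc Y Z)) :=
  stmt_4_general X hfd
end

section
/- Let X be a finite-dimensional Noetherian topological space that is biequidimensional. Then d(x) = codim(closure{x}, X) defines a codimension function on X: whenever x' is a specialization of x with codim(closure{x'}, closure{x}) = 1, one has d(x') = d(x) + 1. -/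
/-!
The codimension of `closure {x}` is the coheight of `pointClosure x` in the poset of irreducible
closed subsets, and `codim (closure {x'}, closure {x}) = 1` says that `pointClosure x'` is covered
by `pointClosure x`. For `a ⋖ b` in a finite-dimensional poset, a longest chain ending at `a`
followed by a longest chain starting at `a`, and the same chain followed by `b` and a longest
chain starting at `b`, are both maximal chains. If all maximal chains have the same length,
comparing the two gives `coheight a = coheight b + 1`.
-/

open Order TopologicalSpace

/-- The closure of a point, as an irreducible closed subset. -/
def pointClosure {X : Type*} [TopologicalSpace X] (x : X) : IrreducibleCloseds X :=
  ⟨closure {x}, isIrreducible_singleton.closure, isClosed_closure⟩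

abbrev CovSeries (α : Type*) [Preorder α] := RelSeries {(a, b) : α × α | a ⋖ b}

namespace CovSeries

variable {α : Type*} [PartialOrder α]

def toLTSeries (c : CovSeries α) : LTSeries α := c.ofLE fun _ h => CovBy.lt h

lemma isMaximalChain_toLTSeries (c : CovSeries α) (hmin : IsMin c.head) (hmax : IsMax c.last) :
    IsMaximalChain c.toLTSeries :=
  ⟨hmin, hmax, c.step⟩

end CovSeries

section

variable {α : Type*} [Preorder α]

/-- A longest series ending at `a` cannot be refined nor extended downwards. -/
lemma exists_covSeries_of_height_eq_coe (a : α) {n : ℕ} (h : height a = n) :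
    ∃ c : CovSeries α, IsMin c.head ∧ c.last = a ∧ c.length = n := by
  obtain ⟨p, hlast, hlen⟩ := exists_series_of_height_eq_coe a h
  have hidx : ∀ i, height (p i) = i :=
    height_eq_index_of_length_eq_height_last (by rw [hlast, h, hlen])
  refine ⟨⟨p.length, p.toFun, fun i => ⟨p.step i, fun z hlt hgt => ?_⟩⟩,
    ?_, hlast, hlen⟩
  · have hlow := height_add_one_le hlt
    have hup := height_add_one_le hgt
    rw [hidx] at hlow hup
    have hz : height z ≠ ⊤ :=
      ne_top_of_le_ne_top (ENat.natCast_ne_top _) (le_self_add.trans hup)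
    lift height z to ℕ using hz with k
    simp only [Fin.val_castSucc, Fin.val_succ] at hlow hup
    norm_cast at hlow hup
    omega
  · exact height_eq_zero.mp (hidx 0)

lemma exists_covSeries_of_coheight_eq_coe (a : α) {n : ℕ} (h : coheight a = n) :
    ∃ c : CovSeries α, c.head = a ∧ IsMax c.last ∧ c.length = n := by
  obtain ⟨p, hhead, hlen⟩ := exists_series_of_coheight_eq_coe a h
  have hidx : ∀ i, coheight (p i) = i.rev :=
    coheight_eq_index_of_length_eq_head_coheight (by rw [hhead, h, hlen])
  refine ⟨⟨p.length, p.toFun, fun i => ⟨p.step i, fun z hlt hgt => ?_⟩⟩,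
    hhead, ?_, hlen⟩
  · have hup := coheight_add_one_le hlt
    have hlow := coheight_add_one_le hgt
    rw [hidx] at hlow hup
    have hz : coheight z ≠ ⊤ :=
      ne_top_of_le_ne_top (ENat.natCast_ne_top _) (le_self_add.trans hup)
    lift coheight z to ℕ using hz with k
    simp only [Fin.val_rev, Fin.val_castSucc, Fin.val_succ] at hlow hup
    norm_cast at hlow hup
    omega
  · exact coheight_eq_zero.mp ((hidx (Fin.last _)).trans (by simp))

end

section Biequidimensional

variable {α : Type*} [PartialOrder α]

lemma Order.height_lt_top [FiniteDimensionalOrder α] (x : α) : height x < ⊤ := by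
  rw [← WithBot.coe_lt_coe]
  exact (height_le_krullDim x).trans_lt
    (by simpa using krullDim_ne_top_of_finiteDimensionalOrder.lt_top)

theorem coheight_eq_coheight_add_one_of_covBy [FiniteDimensionalOrder α]
    (hequi : ∀ p q : LTSeries α, IsMaximalChain p → IsMaximalChain q → p.length = q.length)
    {a b : α} (hab : a ⋖ b) : coheight a = coheight b + 1 := by
  obtain ⟨m, hm⟩ := ENat.ne_top_iff_exists.mp (height_lt_top a).ne
  obtain ⟨k, hk⟩ := ENat.ne_top_iff_exists.mp (coheight_lt_top a).ne
  obtain ⟨l, hl⟩ := ENat.ne_top_iff_exists.mp (coheight_lt_top b).ne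
  obtain ⟨d, hdmin, hdlast, hdlen⟩ := exists_covSeries_of_height_eq_coe a hm.symm
  obtain ⟨u, huhead, humax, hulen⟩ := exists_covSeries_of_coheight_eq_coe a hk.symm
  obtain ⟨v, hvhead, hvmax, hvlen⟩ := exists_covSeries_of_coheight_eq_coe b hl.symm
  have hlen : d.length + u.length = d.length + 1 + v.length := hequi _ _
    (CovSeries.isMaximalChain_toLTSeries (d.smash u (hdlast.trans huhead.symm))
      (by simpa) (by simpa))
    (CovSeries.isMaximalChain_toLTSeries ((d.snoc b (hdlast ▸ hab)).smash v (by simp [hvhead]))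
      (by simpa) (by simpa))
  rw [← hk, ← hl]
  norm_cast
  omega

end Biequidimensional

lemma covBy_of_krullDim_Icc_eq_one {α : Type*} [PartialOrder α] {a b : α}
    (h : krullDim (Set.Icc a b) = 1) : a ⋖ b := by
  obtain ⟨x, y, hxy⟩ := one_le_krullDim_iff.mp h.ge
  refine ⟨x.2.1.trans_lt ((Subtype.coe_lt_coe.mpr hxy).trans_le y.2.2), fun z haz hzb => ?_⟩
  have hab : a ≤ b := haz.le.trans hzb.le
  rcases krullDim_le_one_iff.mp h.le ⟨z, haz.le, hzb.le⟩ with hmin | hmax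
  · exact haz.not_ge (hmin (b := ⟨a, le_rfl, hab⟩) haz.le)
  · exact hzb.not_ge (hmax (b := ⟨b, hab, le_rfl⟩) hzb.le)

theorem stmt_15_general (X : Type*) [TopologicalSpace X]
    (hfd : topologicalKrullDim X < ⊤)
    (hbieq : ∀ p q : LTSeries (IrreducibleCloseds X),
      IsMaximalChain p → IsMaximalChain q → p.length = q.length) :
    ∀ x x' : X, x' ∈ closure {x} →
      Order.krullDim (Set.Icc (pointClosure x') (pointClosure x)) = 1 →
      Order.krullDim (Set.Ici (pointClosure x'))
        = Order.krullDim (Set.Ici (pointClosure x)) + 1 := by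
  intro x x' _ hIcc
  have : FiniteDimensionalOrder (IrreducibleCloseds X) :=
    finiteDimensionalOrder_iff_krullDim_ne_bot_and_top.mpr
      ⟨krullDim_ne_bot_iff.mpr ⟨pointClosure x⟩, hfd.ne⟩
  rw [← coheight_eq_krullDim_Ici, ← coheight_eq_krullDim_Ici,
    coheight_eq_coheight_add_one_of_covBy hbieq (covBy_of_krullDim_Icc_eq_one hIcc)]
  norm_cast

/-- Let `X` be a finite-dimensional Noetherian topological space that is biequidimensional
(all maximal chains of irreducible closed subsets have the same length).  Then
`d x = codim (closure {x}, X)` defines a codimension function on `X`: whenever `x'` is a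
specialization of `x` with `codim (closure {x'}, closure {x}) = 1`, one has
`d x' = d x + 1`. -/
theorem stmt_15 (X : Type*) [TopologicalSpace X] [NoetherianSpace X]
    (hfd : topologicalKrullDim X < ⊤)
    (hbieq : ∀ p q : LTSeries (IrreducibleCloseds X),
      IsMaximalChain p → IsMaximalChain q → p.length = q.length) :
    ∀ x x' : X, x' ∈ closure {x} →
      Order.krullDim (Set.Icc (pointClosure x') (pointClosure x)) = 1 →
      Order.krullDim (Set.Ici (pointClosure x'))
        = Order.krullDim (Set.Ici (pointClosure x)) + 1 :=
  stmt_15_general X hfd hbieq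
end
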